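/- arXiv:1308.0486 — 2 statements merged into one kernel-verified Lean document; each statement's English description precedes it below -/
import Mathlib

section
/- Given positive constants J, C, F, L, k, k' with J/C + (L + J/F)/(k' + L + J/F) < 1, the system of equations 0 = J - C(x/(k+x) - y/(k'+y)), 0 = F(L-y) + C(x/(k+x) - y/(k'+y)) has a unique solution with y₀ = L + J/F and x₀ = k·(J/C + y₀/(k'+y₀))/(1 - (J/C + y₀/(k'+y₀))), and both x₀ and y₀ are positive. -/
/-!
Adding the two equations eliminates the exchange term and leaves `J + F (L - y) = 0`, which pins
down `y = L + J/F`. The first equation then prescribes the saturation `x/(k + x)` as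
`a = J/C + y/(k' + y)`, and `x ↦ x/(k + x)` is inverted by `a ↦ k a/(1 - a)`; the hypothesis
`a < 1` is exactly what makes this preimage positive.
-/

lemma div_add_eq_iff_eq_mul_div_one_sub {K : Type*} [Field K] {k x a : K}
    (hkx : k + x ≠ 0) (ha : a ≠ 1) :
    x / (k + x) = a ↔ x = k * a / (1 - a) := by
  rw [div_eq_iff hkx, eq_div_iff (sub_ne_zero.2 ha.symm)]
  constructor <;> intro h <;> linear_combination h

lemma exchange_balance_iff {K : Type*} [Field K] {J C F L y u v : K} (hC : C ≠ 0) (hF : F ≠ 0) :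
    (0 = J - C * (u - v) ∧ 0 = F * (L - y) + C * (u - v)) ↔
      (y = L + J / F ∧ u = J / C + v) := by
  constructor
  · rintro ⟨h₁, h₂⟩
    constructor
    · field_simp
      linear_combination h₁ + h₂
    · field_simp
      linear_combination h₁
  · rintro ⟨rfl, rfl⟩
    constructor <;> field_simp <;> ring

/-- Unique stationary point of the 2D fast-slow lactate system. -/
theorem stmt_0 (J C F L k k' : ℝ)
    (hJ : 0 < J) (hC : 0 < C) (hF : 0 < F) (hL : 0 < L) (hk : 0 < k) (hk' : 0 < k')
    (hnd : J / C + (L + J / F) / (k' + (L + J / F)) < 1) :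
    let y₀ : ℝ := L + J / F
    let x₀ : ℝ := k * (J / C + y₀ / (k' + y₀)) / (1 - (J / C + y₀ / (k' + y₀)))
    0 < x₀ ∧ 0 < y₀ ∧
    (0 = J - C * (x₀ / (k + x₀) - y₀ / (k' + y₀)) ∧
      0 = F * (L - y₀) + C * (x₀ / (k + x₀) - y₀ / (k' + y₀))) ∧
    ∀ x y : ℝ, 0 < x → 0 < y →
      0 = J - C * (x / (k + x) - y / (k' + y)) →
      0 = F * (L - y) + C * (x / (k + x) - y / (k' + y)) →
      x = x₀ ∧ y = y₀ := by
  intro y₀ x₀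
  have hy₀ : 0 < y₀ := by positivity
  have hx₀ : 0 < x₀ := div_pos (by positivity) (sub_pos.2 hnd)
  refine ⟨hx₀, hy₀, (exchange_balance_iff hC.ne' hF.ne').2 ⟨rfl, ?_⟩, ?_⟩
  · exact (div_add_eq_iff_eq_mul_div_one_sub (by positivity) hnd.ne).2 rfl
  · intro x y hx _ h₁ h₂
    obtain ⟨rfl, hsat⟩ := (exchange_balance_iff hC.ne' hF.ne').1 ⟨h₁, h₂⟩
    exact ⟨(div_add_eq_iff_eq_mul_div_one_sub (by positivity) hnd.ne).1 hsat, rfl⟩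
end

section
/- Let F(t) > 0, C, L, k, k' > 0 and x ≥ 0. Then y = φ(x,t) := ½·[−k' − Ck/((k+x)F(t)) + L + √Δ(t)], where Δ(t) = [k' + Ck/((k+x)F(t)) − L]² + 4k'L + 4k'Cx/((k+x)F(t)), is nonnegative and satisfies F(t)(L−y) + C(x/(k+x) − y/(k'+y)) = 0. -/
/-!
Clearing denominators turns the critical-manifold equation into the quadratic
`y ^ 2 + b y - c = 0` with `b = k' + C k / ((k + x) F) - L` and `c = k' L + k' C x / ((k + x) F)`,
so `Δ = b ^ 2 + 4 c` is its discriminant and `φ` its larger root. Since `c ≥ 0`, we have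
`√Δ ≥ |b|`, so this root is nonnegative; in particular `k' + y > 0` and the denominators
cleared along the way do not vanish.
-/

lemma quadratic_larger_root_nonneg {b c : ℝ} (hc : 0 ≤ c) :
    0 ≤ 1 / 2 * (-b + √(b ^ 2 + 4 * c)) := by
  have : |b| ≤ √(b ^ 2 + 4 * c) := by
    rw [← Real.sqrt_sq_eq_abs]
    exact Real.sqrt_le_sqrt (by linarith)
  linarith [le_abs_self b]

lemma quadratic_larger_root_eq {b c : ℝ} (hc : 0 ≤ c) :
    (1 / 2 * (-b + √(b ^ 2 + 4 * c))) ^ 2 + b * (1 / 2 * (-b + √(b ^ 2 + 4 * c))) - c = 0 := by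
  have hsq := Real.sq_sqrt (by positivity : 0 ≤ b ^ 2 + 4 * c)
  linear_combination (1 / 4) * hsq

lemma critical_manifold_eq_quadratic {C L k k' x y F : ℝ} (hkx : k + x ≠ 0) (hF : F ≠ 0)
    (hky : k' + y ≠ 0) :
    F * (L - y) + C * (x / (k + x) - y / (k' + y)) =
      -(F / (k' + y)) * (y ^ 2 + (k' + C * k / ((k + x) * F) - L) * y
        - (k' * L + k' * C * x / ((k + x) * F))) := by
  field_simp
  ring

/-- Explicit parametrization of the attracting branch of the critical manifold. -/
theorem stmt_8 (C L k k' x Ft : ℝ) (hC : 0 < C) (hL : 0 < L) (hk : 0 < k)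
    (hk' : 0 < k') (hx : 0 ≤ x) (hFt : 0 < Ft) :
    let Δ : ℝ := (k' + C * k / ((k + x) * Ft) - L) ^ 2 + 4 * k' * L
      + 4 * k' * C * x / ((k + x) * Ft)
    let y : ℝ := (1 / 2) * (-k' - C * k / ((k + x) * Ft) + L + Real.sqrt Δ)
    0 ≤ y ∧ Ft * (L - y) + C * (x / (k + x) - y / (k' + y)) = 0 := by
  intro Δ y
  set b := k' + C * k / ((k + x) * Ft) - L
  set c := k' * L + k' * C * x / ((k + x) * Ft)
  have hkx : 0 < k + x := by linarith
  have hc : 0 ≤ c := by positivity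
  have hy : y = 1 / 2 * (-b + √(b ^ 2 + 4 * c)) := by
    have hΔ : Δ = b ^ 2 + 4 * c := by simp only [Δ, c]; ring
    simp only [y, hΔ, b]
    ring
  have hy0 : 0 ≤ y := hy ▸ quadratic_larger_root_nonneg hc
  refine ⟨hy0, ?_⟩
  rw [critical_manifold_eq_quadratic hkx.ne' hFt.ne' (by linarith), hy,
    quadratic_larger_root_eq hc, mul_zero]
end
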